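/- arXiv:1806.03907 — 2 statements merged into one kernel-verified Lean document; each statement's English description precedes it below -/
import Mathlib

section
/- Let x = P(x) be a minimax-PPS whose greatest fixed point g* ∈ [0,1]^n satisfies g* < 1 in every coordinate. Then for every LDF policy τ' for the min player, g* ≤ q*_{*,τ'}, where q*_{*,τ'} is the least fixed point in [0,1]^n of the maxPPS x = P_{*,τ'}(x). -/
open Filter Topology

/-- A probabilistic polynomial in `n` variables: `∑ r, p r * x ^ expo r`,
with nonnegative coefficients summing to at most 1. -/
structure ProbPoly (n : ℕ) where
  numTerms : ℕ
  p : Fin numTerms → ℝ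
  expo : Fin numTerms → Fin n → ℕ
  p_nonneg : ∀ r, 0 ≤ p r
  p_sum_le_one : ∑ r, p r ≤ 1

/-- Evaluation of a probabilistic polynomial. -/
def ProbPoly.eval {n : ℕ} (P : ProbPoly n) (x : Fin n → ℝ) : ℝ :=
  ∑ r, P.p r * ∏ i, x i ^ P.expo r i

/-- The unit box `[0,1]^n`. -/
def box01 (n : ℕ) : Set (Fin n → ℝ) := {x | ∀ i, 0 ≤ x i ∧ x i ≤ 1}

/-- The minimax value of the zero-sum matrix game with payoff matrix `B`:
`Val(B) = max_{s ∈ Δ_k} min_{t ∈ Δ_m} sᵀ B t`. -/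
noncomputable def gameVal {k m : ℕ} (B : Matrix (Fin k) (Fin m) ℝ) : ℝ :=
  ⨆ s : stdSimplex ℝ (Fin k), ⨅ t : stdSimplex ℝ (Fin m),
    ∑ i : Fin k, ∑ j : Fin m, s.1 i * B i j * t.1 j

/-- A probability distribution on `Fin k`. -/
def IsDist {k : ℕ} (d : Fin k → ℝ) : Prop := (∀ j, 0 ≤ d j) ∧ ∑ j, d j = 1

/-- `g` is the greatest fixed point of `F` in `[0,1]^n`. -/
def IsGFP {n : ℕ} (F : (Fin n → ℝ) → Fin n → ℝ) (g : Fin n → ℝ) : Prop :=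
  g ∈ box01 n ∧ F g = g ∧ ∀ g' ∈ box01 n, F g' = g' → g' ≤ g

/-- `q` is the least fixed point of `F` in `[0,1]^n`. -/
def IsLFP {n : ℕ} (F : (Fin n → ℝ) → Fin n → ℝ) (q : Fin n → ℝ) : Prop :=
  q ∈ box01 n ∧ F q = q ∧ ∀ q' ∈ box01 n, F q' = q' → q ≤ q'

/-- A minimax probabilistic polynomial system (minimax-PPS) in `n` variables:
for each `i`, an `nr i × nc i` matrix of probabilistic polynomials. -/
structure MinimaxPPS (n : ℕ) where
  nr : Fin n → ℕ
  nc : Fin n → ℕ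
  nr_pos : ∀ i, 0 < nr i
  nc_pos : ∀ i, 0 < nc i
  q : (i : Fin n) → Fin (nr i) → Fin (nc i) → ProbPoly n

namespace MinimaxPPS

/-- The payoff matrix `A_i(x)`. -/
noncomputable def A {n : ℕ} (P : MinimaxPPS n) (i : Fin n) (x : Fin n → ℝ) :
    Matrix (Fin (P.nr i)) (Fin (P.nc i)) ℝ :=
  Matrix.of fun j k => (P.q i j k).eval x

/-- `P(x)`: coordinatewise the value of the matrix game `A_i(x)`. -/
noncomputable def eval {n : ℕ} (P : MinimaxPPS n) (x : Fin n → ℝ) : Fin n → ℝ :=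
  fun i => gameVal (P.A i x)

/-- The minPPS `P_{σ,*}` obtained by fixing a mixed policy `σ` for the max player. -/
noncomputable def fixMax {n : ℕ} (P : MinimaxPPS n)
    (σ : (i : Fin n) → Fin (P.nr i) → ℝ) (x : Fin n → ℝ) : Fin n → ℝ :=
  fun i => ⨅ k : Fin (P.nc i), ∑ j, σ i j * (P.q i j k).eval x

/-- The maxPPS `P_{*,τ}` obtained by fixing a mixed policy `τ` for the min player. -/
noncomputable def fixMin {n : ℕ} (P : MinimaxPPS n)
    (τ : (i : Fin n) → Fin (P.nc i) → ℝ) (x : Fin n → ℝ) : Fin n → ℝ :=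
  fun i => ⨆ j : Fin (P.nr i), ∑ k, τ i k * (P.q i j k).eval x

/-- The PPS `P_{σ,τ}` obtained by fixing both policies. -/
def fixBoth {n : ℕ} (P : MinimaxPPS n)
    (σ : (i : Fin n) → Fin (P.nr i) → ℝ) (τ : (i : Fin n) → Fin (P.nc i) → ℝ)
    (x : Fin n → ℝ) : Fin n → ℝ :=
  fun i => ∑ j, ∑ k, σ i j * τ i k * (P.q i j k).eval x

end MinimaxPPS

/-- A PPS: each coordinate is a probabilistic polynomial. -/
structure PPS (n : ℕ) where
  poly : Fin n → ProbPoly n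

namespace PPS

def eval {n : ℕ} (P : PPS n) (x : Fin n → ℝ) : Fin n → ℝ := fun i => (P.poly i).eval x

/-- Edge of the dependency graph: `x_j` appears (with a nonzero coefficient) in `P_i(x)`. -/
def depends {n : ℕ} (P : PPS n) (i j : Fin n) : Prop :=
  ∃ r, (P.poly i).p r ≠ 0 ∧ (P.poly i).expo r j ≠ 0

end PPS

/-- A probabilistic polynomial is linear degenerate: every term with nonzero coefficient
has total degree exactly 1 (so it is linear with no constant term), and the
coefficients sum to exactly 1. -/
def IsLDPoly {n : ℕ} (Q : ProbPoly n) : Prop :=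
  (∀ r, Q.p r ≠ 0 → ∑ j, Q.expo r j = 1) ∧ ∑ r, Q.p r = 1

/-- There exists a bottom strongly connected component of the dependency relation `dep`
all of whose members satisfy `ld`. -/
def IsLDBottom {n : ℕ} (dep : Fin n → Fin n → Prop) (ld : Fin n → Prop) : Prop :=
  ∃ S : Set (Fin n), S.Nonempty ∧
    (∀ i ∈ S, ∀ j ∈ S, Relation.ReflTransGen dep i j) ∧
    (∀ i ∈ S, ∀ j, dep i j → j ∈ S) ∧
    (∀ i ∈ S, ld i)

/-- A PPS is linear degenerate free (LDF): no bottom strongly connected component of its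
dependency graph induces an LD subsystem. -/
def PPS.IsLDF {n : ℕ} (P : PPS n) : Prop :=
  ¬ IsLDBottom P.depends (fun i => IsLDPoly (P.poly i))

namespace MinimaxPPS

/-- Dependency relation of the PPS `P_{σ,τ}`. -/
def dependsMix {n : ℕ} (P : MinimaxPPS n) (σ : (i : Fin n) → Fin (P.nr i) → ℝ)
    (τ : (i : Fin n) → Fin (P.nc i) → ℝ) (i j : Fin n) : Prop :=
  ∃ a b r, σ i a ≠ 0 ∧ τ i b ≠ 0 ∧ (P.q i a b).p r ≠ 0 ∧ (P.q i a b).expo r j ≠ 0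

/-- Coordinate `i` of the PPS `P_{σ,τ}` is linear degenerate. -/
def IsLDMixAt {n : ℕ} (P : MinimaxPPS n) (σ : (i : Fin n) → Fin (P.nr i) → ℝ)
    (τ : (i : Fin n) → Fin (P.nc i) → ℝ) (i : Fin n) : Prop :=
  (∀ a b r, σ i a ≠ 0 → τ i b ≠ 0 → (P.q i a b).p r ≠ 0 → ∑ j, (P.q i a b).expo r j = 1) ∧
  (∑ a, ∑ b, σ i a * τ i b * ∑ r, (P.q i a b).p r) = 1

/-- A mixed min-player policy `τ` is LDF if for every mixed max-player policy `σ`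
the PPS `P_{σ,τ}` is an LDF-PPS. -/
def IsLDFPolicy {n : ℕ} (P : MinimaxPPS n) (τ : (i : Fin n) → Fin (P.nc i) → ℝ) : Prop :=
  ∀ σ : (i : Fin n) → Fin (P.nr i) → ℝ, (∀ i, IsDist (σ i)) →
    ¬ IsLDBottom (P.dependsMix σ τ) (P.IsLDMixAt σ τ)

end MinimaxPPS

/-- The three forms of equations in an SNF minimax-PPS. -/
inductive SNFForm | L | Q | M
  deriving DecidableEq

/-- A minimax-PPS in simple normal form (SNF): each coordinate is of form L
(linear, `a0 i + ∑ j, a i j * x j`), form Q (`x (quadL i) * x (quadR i)`), or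
form M (the value of a matrix game each of whose entries is a variable or the
constant 1, encoded by `Option (Fin n)` with `none` standing for `1`). -/
structure SNFPPS (n : ℕ) where
  form : Fin n → SNFForm
  a0 : Fin n → ℝ
  a : Fin n → Fin n → ℝ
  quadL : Fin n → Fin n
  quadR : Fin n → Fin n
  nr : Fin n → ℕ
  nc : Fin n → ℕ
  nr_pos : ∀ i, 0 < nr i
  nc_pos : ∀ i, 0 < nc i
  entry : (i : Fin n) → Fin (nr i) → Fin (nc i) → Option (Fin n)
  a0_nonneg : ∀ i, 0 ≤ a0 i
  a_nonneg : ∀ i j, 0 ≤ a i j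
  a_sum_le_one : ∀ i, a0 i + ∑ j, a i j ≤ 1

namespace SNFPPS

noncomputable def eval {n : ℕ} (P : SNFPPS n) (x : Fin n → ℝ) : Fin n → ℝ := fun i =>
  match P.form i with
  | SNFForm.L => P.a0 i + ∑ j, P.a i j * x j
  | SNFForm.Q => x (P.quadL i) * x (P.quadR i)
  | SNFForm.M => gameVal (Matrix.of fun j k => (P.entry i j k).elim 1 x)

/-- The maxPPS `P_{*,τ}` obtained by fixing a mixed policy `τ` for the min player. -/
noncomputable def fixMin {n : ℕ} (P : SNFPPS n)
    (τ : (i : Fin n) → Fin (P.nc i) → ℝ) (x : Fin n → ℝ) : Fin n → ℝ := fun i =>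
  match P.form i with
  | SNFForm.L => P.a0 i + ∑ j, P.a i j * x j
  | SNFForm.Q => x (P.quadL i) * x (P.quadR i)
  | SNFForm.M => ⨆ j : Fin (P.nr i), ∑ k, τ i k * (P.entry i j k).elim 1 x

/-- The minPPS `P_{σ,*}` obtained by fixing a mixed policy `σ` for the max player. -/
noncomputable def fixMax {n : ℕ} (P : SNFPPS n)
    (σ : (i : Fin n) → Fin (P.nr i) → ℝ) (x : Fin n → ℝ) : Fin n → ℝ := fun i =>
  match P.form i with
  | SNFForm.L => P.a0 i + ∑ j, P.a i j * x j
  | SNFForm.Q => x (P.quadL i) * x (P.quadR i)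
  | SNFForm.M => ⨅ k : Fin (P.nc i), ∑ j, σ i j * (P.entry i j k).elim 1 x

/-- `S` is closed under the rules defining the least closure set: it contains every
deficient form-L variable, and is closed under rules (a) and (b). -/
def Closed {n : ℕ} (P : SNFPPS n) (S : Set (Fin n)) : Prop :=
  (∀ i, P.form i = SNFForm.L → P.a0 i + ∑ j, P.a i j < 1 → i ∈ S) ∧
  (∀ i, P.form i = SNFForm.L → (∃ j ∈ S, P.a i j ≠ 0) → i ∈ S) ∧
  (∀ i, P.form i = SNFForm.Q → (P.quadL i ∈ S ∨ P.quadR i ∈ S) → i ∈ S) ∧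
  (∀ i, P.form i = SNFForm.M →
    (∀ r : Fin (P.nr i), ∃ c : Fin (P.nc i), ∃ v ∈ S, P.entry i r c = some v) → i ∈ S)

/-- The least closure set `S`. -/
def leastClosure {n : ℕ} (P : SNFPPS n) : Set (Fin n) := ⋂₀ {S | P.Closed S}

end SNFPPS

/-- Labels for the three sets in the limit-sure construction: `s` (the set `S ∪ {1}`),
`f` (the set `F`), and `o` (the remaining set `O`). -/
inductive Lab | s | f | o
  deriving DecidableEq

/-!
Let the max player answer `τ'` at `g` with a best pure row `row i`, and let `Q = P_{row,τ'}`.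
Then `g ≤ Q(g)` and `Q(q') ≤ q'`, and `Q` is LDF because `τ'` is. For an LDF-PPS every
post-fixed point `z < 1` lies below every pre-fixed point `y` in `[0,1]^n`: otherwise take the
largest `c ∈ (0,1)` with `z ≤ u := (1 - c) y + c`. On the set `E` where `z = u` the chain
`u ≤ Q(z) ≤ Q(u) ≤ (1 - c) Q(y) + c ≤ u` is tight. Since
`((1 - c) a + c) ((1 - c) b + c) < (1 - c) ab + c` for `a, b < 1`, tightness leaves on `E` only
probability mixtures of constants and variables of `E`. Among the variables of `E` those where
`y` is minimal (and `< 1`) cannot use constants, so they form a closed set of linear degenerate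
equations, and a bottom SCC inside it contradicts LDF.
-/

open Finset

theorem Finset.prod_lt_prod_of_nonneg {ι R : Type*} [CommSemiring R] [PartialOrder R]
    [IsStrictOrderedRing R] {s : Finset ι} {f g : ι → R} (hf : ∀ i ∈ s, 0 ≤ f i)
    (hg : ∀ i ∈ s, 0 < g i) (hfg : ∀ i ∈ s, f i ≤ g i) (hlt : ∃ i ∈ s, f i < g i) :
    ∏ i ∈ s, f i < ∏ i ∈ s, g i := by
  classical
  obtain ⟨i, hi, hilt⟩ := hlt
  rw [← insert_erase hi, prod_insert (notMem_erase _ _), prod_insert (notMem_erase _ _)]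
  exact mul_lt_mul_of_lt_of_le_of_nonneg_of_pos hilt
    (prod_le_prod (fun j hj => hf j (mem_of_mem_erase hj)) fun j hj => hfg j (mem_of_mem_erase hj))
    (hf i hi) (prod_pos fun j hj => hg j (mem_of_mem_erase hj))

theorem Finset.prod_pow_eq_prod_sigma {ι M : Type*} [Fintype ι] [CommMonoid M] (f : ι → M)
    (e : ι → ℕ) : ∏ j, f j ^ e j = ∏ x ∈ univ.sigma fun j => range (e j), f x.1 := by
  simp [prod_sigma]

theorem Finset.prod_pow_eq_one_of_sum_eq_zero {ι M : Type*} [Fintype ι] [CommMonoid M] (v : ι → M)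
    {e : ι → ℕ} (he : ∑ k, e k = 0) : ∏ k, v k ^ e k = 1 :=
  prod_eq_one fun k _ => by rw [sum_eq_zero_iff.1 he k (mem_univ k), pow_zero]

theorem Finset.prod_pow_eq_of_sum_eq_one {ι M : Type*} [Fintype ι] [CommMonoid M] (v : ι → M)
    {e : ι → ℕ} (he : ∑ k, e k = 1) {j : ι} (hj : e j ≠ 0) : ∏ k, v k ^ e k = v j := by
  classical
  have hsplit := add_sum_erase univ e (mem_univ j)
  have hrest : ∀ k ∈ univ.erase j, e k = 0 := sum_eq_zero_iff.1 (by omega)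
  rw [← mul_prod_erase univ _ (mem_univ j), prod_eq_one fun k hk => by rw [hrest k hk, pow_zero],
    show e j = 1 by omega, pow_one, mul_one]

theorem prod_pow_le_prod_pow {ι : Type*} [Fintype ι] {x w : ι → ℝ} (hx : 0 ≤ x) (hxw : x ≤ w)
    (e : ι → ℕ) : ∏ j, x j ^ e j ≤ ∏ j, w j ^ e j :=
  prod_le_prod (fun j _ => pow_nonneg (hx j) _) fun j _ => pow_le_pow_left₀ (hx j) (hxw j) _

theorem prod_pow_lt_prod_pow {ι : Type*} [Fintype ι] {z u : ι → ℝ} (hz0 : 0 ≤ z)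
    (hu : ∀ j, 0 < u j) (hzu : z ≤ u) {e : ι → ℕ} {j : ι} (hj : e j ≠ 0)
    (hlt : z j < u j) : ∏ k, z k ^ e k < ∏ k, u k ^ e k := by
  rw [prod_pow_eq_prod_sigma, prod_pow_eq_prod_sigma]
  exact prod_lt_prod_of_nonneg (fun x _ => hz0 x.1) (fun x _ => hu x.1) (fun x _ => hzu x.1)
    ⟨⟨j, 0⟩, by simp [Nat.pos_of_ne_zero hj], hlt⟩

def towardOne (c t : ℝ) : ℝ := (1 - c) * t + c

section TowardOne

variable {c : ℝ}

theorem towardOne_mul_towardOne (c a b : ℝ) :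
    towardOne c a * towardOne c b = towardOne c (a * b) - c * (1 - c) * ((1 - a) * (1 - b)) := by
  unfold towardOne; ring

theorem towardOne_nonneg (hc0 : 0 ≤ c) (hc1 : c ≤ 1) {t : ℝ} (ht : 0 ≤ t) :
    0 ≤ towardOne c t := by
  unfold towardOne; nlinarith

theorem towardOne_mul_le (hc0 : 0 ≤ c) (hc1 : c ≤ 1) {a b : ℝ} (ha : a ≤ 1) (hb : b ≤ 1) :
    towardOne c a * towardOne c b ≤ towardOne c (a * b) := by
  have : 0 ≤ c * (1 - c) * ((1 - a) * (1 - b)) := by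
    apply mul_nonneg (mul_nonneg _ _) (mul_nonneg _ _) <;> linarith
  linarith [towardOne_mul_towardOne c a b]

theorem towardOne_mul_lt (hc0 : 0 < c) (hc1 : c < 1) {a b : ℝ} (ha : a < 1) (hb : b < 1) :
    towardOne c a * towardOne c b < towardOne c (a * b) := by
  have : 0 < c * (1 - c) * ((1 - a) * (1 - b)) := by
    apply mul_pos (mul_pos _ _) (mul_pos _ _) <;> linarith
  linarith [towardOne_mul_towardOne c a b]

theorem prod_towardOne_le {ι : Type*} (s : Finset ι) {w : ι → ℝ} (hc0 : 0 ≤ c) (hc1 : c ≤ 1)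
    (hw0 : ∀ x ∈ s, 0 ≤ w x) (hw1 : ∀ x ∈ s, w x ≤ 1) :
    ∏ x ∈ s, towardOne c (w x) ≤ towardOne c (∏ x ∈ s, w x) := by
  classical
  induction s using Finset.induction_on with
  | empty => simp [towardOne]
  | insert x s hx ih =>
    simp only [mem_insert, forall_eq_or_imp] at hw0 hw1
    rw [prod_insert hx, prod_insert hx]
    calc towardOne c (w x) * ∏ y ∈ s, towardOne c (w y)
        ≤ towardOne c (w x) * towardOne c (∏ y ∈ s, w y) :=
          mul_le_mul_of_nonneg_left (ih hw0.2 hw1.2) (towardOne_nonneg hc0 hc1 hw0.1)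
      _ ≤ towardOne c (w x * ∏ y ∈ s, w y) :=
          towardOne_mul_le hc0 hc1 hw1.1 (prod_le_one hw0.2 hw1.2)

theorem prod_towardOne_lt {ι : Type*} {s : Finset ι} {w : ι → ℝ} (hc0 : 0 < c) (hc1 : c < 1)
    (hs : 1 < #s) (hw0 : ∀ x ∈ s, 0 ≤ w x) (hw1 : ∀ x ∈ s, w x < 1) :
    ∏ x ∈ s, towardOne c (w x) < towardOne c (∏ x ∈ s, w x) := by
  classical
  obtain ⟨x, hx⟩ : s.Nonempty := card_pos.1 (by omega)
  obtain ⟨y, hy⟩ : (s.erase x).Nonempty := card_pos.1 (by rw [card_erase_of_mem hx]; omega)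
  have hrest : ∏ z ∈ s.erase x, w z < 1 := by
    simpa using prod_lt_prod_of_nonneg (fun z hz => hw0 z (mem_of_mem_erase hz))
      (fun _ _ => one_pos) (fun z hz => (hw1 z (mem_of_mem_erase hz)).le)
      ⟨y, hy, hw1 y (mem_of_mem_erase hy)⟩
  rw [← insert_erase hx, prod_insert (notMem_erase x s), prod_insert (notMem_erase x s)]
  calc towardOne c (w x) * ∏ z ∈ s.erase x, towardOne c (w z)
      ≤ towardOne c (w x) * towardOne c (∏ z ∈ s.erase x, w z) :=
        mul_le_mul_of_nonneg_left
          (prod_towardOne_le _ hc0.le hc1.le (fun z hz => hw0 z (mem_of_mem_erase hz))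
            fun z hz => (hw1 z (mem_of_mem_erase hz)).le)
          (towardOne_nonneg hc0.le hc1.le (hw0 x hx))
    _ < towardOne c (w x * ∏ z ∈ s.erase x, w z) := towardOne_mul_lt hc0 hc1 (hw1 x hx) hrest

variable {ι : Type*} [Fintype ι] {v : ι → ℝ}

theorem prod_pow_towardOne_le (hc0 : 0 ≤ c) (hc1 : c ≤ 1) (hv0 : ∀ j, 0 ≤ v j)
    (hv1 : ∀ j, v j ≤ 1) (e : ι → ℕ) :
    ∏ j, towardOne c (v j) ^ e j ≤ towardOne c (∏ j, v j ^ e j) := by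
  rw [prod_pow_eq_prod_sigma, prod_pow_eq_prod_sigma]
  exact prod_towardOne_le _ hc0 hc1 (fun x _ => hv0 x.1) fun x _ => hv1 x.1

theorem prod_pow_towardOne_lt (hc0 : 0 < c) (hc1 : c < 1) (hv0 : ∀ j, 0 ≤ v j) {e : ι → ℕ}
    (hv1 : ∀ j, e j ≠ 0 → v j < 1) (he : 2 ≤ ∑ j, e j) :
    ∏ j, towardOne c (v j) ^ e j < towardOne c (∏ j, v j ^ e j) := by
  rw [prod_pow_eq_prod_sigma, prod_pow_eq_prod_sigma]
  refine prod_towardOne_lt hc0 hc1 (by simp only [card_sigma, card_range]; omega)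
    (fun x _ => hv0 x.1) fun x hx => hv1 x.1 ?_
  have := (mem_sigma.1 hx).2
  simp only [mem_range] at this
  omega

end TowardOne

namespace ProbPoly

variable {n : ℕ} (q : ProbPoly n) {c : ℝ} {y : Fin n → ℝ}

theorem eval_mono {x w : Fin n → ℝ} (hx : 0 ≤ x) (hxw : x ≤ w) : q.eval x ≤ q.eval w :=
  sum_le_sum fun r _ => mul_le_mul_of_nonneg_left (prod_pow_le_prod_pow hx hxw _) (q.p_nonneg r)

theorem sum_mul_towardOne (c : ℝ) (y : Fin n → ℝ) :
    ∑ r, q.p r * towardOne c (∏ j, y j ^ q.expo r j) = (1 - c) * q.eval y + c * ∑ r, q.p r := by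
  simp only [eval, towardOne, mul_sum, ← sum_add_distrib]
  exact sum_congr rfl fun r _ => by ring

theorem eval_towardOne_le (hc0 : 0 ≤ c) (hc1 : c ≤ 1) (hy : y ∈ box01 n) :
    q.eval (fun j => towardOne c (y j)) ≤ (1 - c) * q.eval y + c * ∑ r, q.p r := by
  rw [← sum_mul_towardOne]
  exact sum_le_sum fun r _ => mul_le_mul_of_nonneg_left
    (prod_pow_towardOne_le hc0 hc1 (fun j => (hy j).1) (fun j => (hy j).2) _) (q.p_nonneg r)

theorem degree_le_one_of_eval_towardOne_eq (hc0 : 0 < c) (hc1 : c < 1) (hy : y ∈ box01 n)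
    (h : q.eval (fun j => towardOne c (y j)) = (1 - c) * q.eval y + c * ∑ r, q.p r)
    {r : Fin q.numTerms} (hr : q.p r ≠ 0) (hsupp : ∀ j, q.expo r j ≠ 0 → y j < 1) :
    ∑ j, q.expo r j ≤ 1 := by
  by_contra! hdeg
  have hlt : q.eval (fun j => towardOne c (y j)) < (1 - c) * q.eval y + c * ∑ r, q.p r := by
    rw [← sum_mul_towardOne]
    refine sum_lt_sum (fun s _ => mul_le_mul_of_nonneg_left
      (prod_pow_towardOne_le hc0.le hc1.le (fun j => (hy j).1) (fun j => (hy j).2) _)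
      (q.p_nonneg s)) ⟨r, mem_univ r, mul_lt_mul_of_pos_left ?_ ((q.p_nonneg r).lt_of_ne' hr)⟩
    exact prod_pow_towardOne_lt hc0 hc1 (fun j => (hy j).1) hsupp hdeg
  linarith

theorem eq_of_eval_eq_of_le {z u : Fin n → ℝ} (hz : 0 ≤ z) (hu : ∀ j, 0 < u j) (hzu : z ≤ u)
    (h : q.eval z = q.eval u) {r : Fin q.numTerms} (hr : q.p r ≠ 0) {j : Fin n}
    (hj : q.expo r j ≠ 0) : z j = u j := by
  by_contra hne
  have : q.eval z < q.eval u :=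
    sum_lt_sum (fun s _ => mul_le_mul_of_nonneg_left (prod_pow_le_prod_pow hz hzu _) (q.p_nonneg s))
      ⟨r, mem_univ r, mul_lt_mul_of_pos_left (prod_pow_lt_prod_pow hz hu hzu hj
        ((hzu j).lt_of_ne hne)) ((q.p_nonneg r).lt_of_ne' hr)⟩
  linarith

theorem support_eq_of_eval_eq_min (hsum : ∑ r, q.p r = 1) {m : ℝ} (hm : m < 1)
    (heval : q.eval y = m) (hdeg : ∀ r, q.p r ≠ 0 → ∑ j, q.expo r j ≤ 1)
    (hge : ∀ r, q.p r ≠ 0 → ∀ j, q.expo r j ≠ 0 → m ≤ y j) {r : Fin q.numTerms}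
    (hr : q.p r ≠ 0) : ∑ j, q.expo r j = 1 ∧ ∀ j, q.expo r j ≠ 0 → y j = m := by
  have hterm_ge : ∀ s, q.p s * m ≤ q.p s * ∏ j, y j ^ q.expo s j := by
    intro s
    by_cases hs : q.p s = 0
    · simp [hs]
    refine mul_le_mul_of_nonneg_left ?_ (q.p_nonneg s)
    rcases Nat.le_one_iff_eq_zero_or_eq_one.1 (hdeg s hs) with h0 | h1
    · rw [prod_pow_eq_one_of_sum_eq_zero y h0]; exact hm.le
    · obtain ⟨j, -, hj⟩ := exists_ne_zero_of_sum_ne_zero (h1.symm ▸ one_ne_zero)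
      rw [prod_pow_eq_of_sum_eq_one y h1 hj]
      exact hge s hs j hj
  have hterm : ∏ j, y j ^ q.expo r j = m := by
    have hsum_eq : ∑ s, q.p s * m = ∑ s, q.p s * ∏ j, y j ^ q.expo s j := by
      rw [← sum_mul, hsum, one_mul, ← heval, eval]
    exact (mul_left_cancel₀ hr
      ((sum_eq_sum_iff_of_le fun s _ => hterm_ge s).1 hsum_eq r (mem_univ r))).symm
  rcases Nat.le_one_iff_eq_zero_or_eq_one.1 (hdeg r hr) with h0 | h1
  · rw [prod_pow_eq_one_of_sum_eq_zero y h0] at hterm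
    linarith
  · exact ⟨h1, fun j hj => by rw [← prod_pow_eq_of_sum_eq_one y h1 hj, hterm]⟩

end ProbPoly

theorem exists_bottomSCC_subset {α : Type*} [Finite α] (r : α → α → Prop) {C : Set α}
    (hC : C.Nonempty) (hclosed : ∀ i ∈ C, ∀ j, r i j → j ∈ C) :
    ∃ T ⊆ C, T.Nonempty ∧ (∀ i ∈ T, ∀ j ∈ T, Relation.ReflTransGen r i j) ∧
      ∀ i ∈ T, ∀ j, r i j → j ∈ T := by
  let reach : α → Set α := fun i => {j | Relation.ReflTransGen r i j}
  have reach_subset : ∀ i ∈ C, reach i ⊆ C := fun i hi j hj => by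
    induction hj with
    | refl => exact hi
    | tail _ hstep ih => exact hclosed _ ih _ hstep
  obtain ⟨i0, hi0, hmin⟩ := C.toFinite.exists_minimalFor reach C hC
  refine ⟨reach i0, reach_subset i0 hi0, ⟨i0, .refl⟩, fun i hi j hj => ?_,
    fun i hi j hij => Relation.ReflTransGen.tail hi hij⟩
  exact hmin (reach_subset i0 hi0 hi) (fun k hk => Relation.ReflTransGen.trans hi hk) hj

theorem IsLDBottom.of_iff {n : ℕ} {dep dep' : Fin n → Fin n → Prop} {ld ld' : Fin n → Prop}
    (h : IsLDBottom dep ld) (hdep : ∀ i j, dep i j ↔ dep' i j) (hld : ∀ i, ld i → ld' i) :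
    IsLDBottom dep' ld' := by
  obtain ⟨S, hne, hscc, hclosed, hS⟩ := h
  exact ⟨S, hne,
    fun i hi j hj => Relation.ReflTransGen.mono (fun a b => (hdep a b).1) i j (hscc i hi j hj),
    fun i hi j hij => hclosed i hi j ((hdep i j).2 hij), fun i hi => hld i (hS i hi)⟩

theorem exists_tight_towardOne_bound {ι : Type*} [Fintype ι] {y z : ι → ℝ} (hy1 : ∀ i, y i ≤ 1)
    (hz1 : ∀ i, z i < 1) (h : ¬z ≤ y) :
    ∃ c, 0 < c ∧ c < 1 ∧ (∀ i, z i ≤ towardOne c (y i)) ∧ ∃ i, z i = towardOne c (y i) := by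
  obtain ⟨i0, hi0⟩ : ∃ i, y i < z i := by simpa [Pi.le_def] using h
  -- where `y i = 1` the ratio is `(z i - 1) / 0 = 0`, below the positive ratio at `i0`
  obtain ⟨i1, -, hmax⟩ :=
    exists_max_image univ (fun i => (z i - y i) / (1 - y i)) ⟨i0, mem_univ i0⟩
  set c := (z i1 - y i1) / (1 - y i1) with hc
  have hc0 : 0 < c :=
    (div_pos (by linarith) (by linarith [hz1 i0])).trans_le (hmax i0 (mem_univ i0))
  have hyi1 : y i1 < 1 := (hy1 i1).lt_of_ne fun h1 => by simp [hc, h1] at hc0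
  have hc1 : c < 1 := (div_lt_one (by linarith)).2 (by linarith [hz1 i1])
  refine ⟨c, hc0, hc1, fun i => ?_, i1, ?_⟩
  · unfold towardOne
    rcases (hy1 i).lt_or_eq with hyi | hyi
    · have := (div_le_iff₀ (by linarith)).1 (hmax i (mem_univ i))
      linarith
    · rw [hyi]; linarith [hz1 i]
  · have : c * (1 - y i1) = z i1 - y i1 := div_mul_cancel₀ _ (by linarith)
    unfold towardOne
    linarith

namespace PPS

variable {n : ℕ} (Q : PPS n)

theorem isLDBottom_of_closed_fixed_set {E : Set (Fin n)} (hE : E.Nonempty) {y : Fin n → ℝ}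
    (hy1 : ∀ i ∈ E, y i < 1) (hfix : ∀ i ∈ E, (Q.poly i).eval y = y i)
    (hsum : ∀ i ∈ E, ∑ r, (Q.poly i).p r = 1)
    (hdeg : ∀ i ∈ E, ∀ r, (Q.poly i).p r ≠ 0 → ∑ j, (Q.poly i).expo r j ≤ 1)
    (hclosed : ∀ i ∈ E, ∀ j, Q.depends i j → j ∈ E) :
    IsLDBottom Q.depends fun i => IsLDPoly (Q.poly i) := by
  obtain ⟨i0, hi0, hmin⟩ := E.exists_min_image y E.toFinite hE
  have hEmin : ∀ i ∈ E, y i = y i0 → ∀ r, (Q.poly i).p r ≠ 0 →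
      ∑ j, (Q.poly i).expo r j = 1 ∧ ∀ j, (Q.poly i).expo r j ≠ 0 → y j = y i0 :=
    fun i hi hyi r hr => (Q.poly i).support_eq_of_eval_eq_min (hsum i hi) (hy1 i0 hi0)
      ((hfix i hi).trans hyi) (hdeg i hi) (fun r hr j hj => hmin j (hclosed i hi j ⟨r, hr, hj⟩)) hr
  obtain ⟨T, hTsub, hTne, hTscc, hTclosed⟩ := exists_bottomSCC_subset Q.depends
    (C := {i | i ∈ E ∧ y i = y i0}) ⟨i0, hi0, rfl⟩
    fun i ⟨hi, hyi⟩ j ⟨r, hr, hj⟩ => ⟨hclosed i hi j ⟨r, hr, hj⟩, (hEmin i hi hyi r hr).2 j hj⟩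
  exact ⟨T, hTne, hTscc, hTclosed, fun i hi =>
    ⟨fun r hr => (hEmin i (hTsub hi).1 (hTsub hi).2 r hr).1, hsum i (hTsub hi).1⟩⟩

theorem le_of_isLDF (hQ : Q.IsLDF) {y z : Fin n → ℝ} (hy : y ∈ box01 n) (hQy : Q.eval y ≤ y)
    (hz0 : 0 ≤ z) (hz1 : ∀ i, z i < 1) (hQz : z ≤ Q.eval z) : z ≤ y := by
  by_contra hzy
  obtain ⟨c, hc0, hc1, hzu, i0, hi0⟩ := exists_tight_towardOne_bound (fun i => (hy i).2) hz1 hzy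
  set u : Fin n → ℝ := fun i => towardOne c (y i) with hu
  have hu0 : ∀ i, 0 < u i := fun i => by simp only [hu, towardOne]; nlinarith [(hy i).1]
  have hy_lt : ∀ i, z i = u i → y i < 1 := fun i hi => (hy i).2.lt_of_ne fun h1 => by
    simp only [hu, towardOne, h1] at hi
    linarith [hz1 i]
  have hchain : ∀ i, z i = u i →
      (Q.poly i).eval z = (Q.poly i).eval u ∧
      (Q.poly i).eval u = (1 - c) * (Q.poly i).eval y + c * ∑ r, (Q.poly i).p r ∧
      (Q.poly i).eval y = y i ∧ ∑ r, (Q.poly i).p r = 1 := by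
    intro i hi
    have hz_le : z i ≤ (Q.poly i).eval z := hQz i
    have hQz_le : (Q.poly i).eval z ≤ (Q.poly i).eval u := (Q.poly i).eval_mono hz0 hzu
    have hQu_le : (Q.poly i).eval u ≤ (1 - c) * (Q.poly i).eval y + c * ∑ r, (Q.poly i).p r :=
      (Q.poly i).eval_towardOne_le hc0.le hc1.le hy
    have hQy_le : (1 - c) * (Q.poly i).eval y ≤ (1 - c) * y i :=
      mul_le_mul_of_nonneg_left (hQy i) (by linarith)
    have hsum_le : c * ∑ r, (Q.poly i).p r ≤ c * 1 :=
      mul_le_mul_of_nonneg_left (Q.poly i).p_sum_le_one hc0.le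
    have hui : u i = (1 - c) * y i + c := rfl
    exact ⟨by linarith, by linarith, mul_left_cancel₀ (sub_ne_zero.2 hc1.ne') (by linarith),
      mul_left_cancel₀ hc0.ne' (by linarith)⟩
  have hclosed : ∀ i, z i = u i → ∀ j, Q.depends i j → z j = u j := fun i hi j ⟨r, hr, hj⟩ =>
    (Q.poly i).eq_of_eval_eq_of_le hz0 hu0 hzu (hchain i hi).1 hr hj
  exact hQ <| Q.isLDBottom_of_closed_fixed_set (E := {i | z i = u i}) ⟨i0, hi0⟩
    (fun i hi => hy_lt i hi) (fun i hi => (hchain i hi).2.2.1) (fun i hi => (hchain i hi).2.2.2)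
    (fun i hi r hr => (Q.poly i).degree_le_one_of_eval_towardOne_eq hc0 hc1 hy (hchain i hi).2.1 hr
      fun j hj => hy_lt j (hclosed i hi j ⟨r, hr, hj⟩)) hclosed

end PPS

theorem Fintype.sum_finSigmaFinEquiv_symm {m : ℕ} {k : Fin m → ℕ} {M : Type*} [AddCommMonoid M]
    (f : (Σ b, Fin (k b)) → M) :
    ∑ r, f (finSigmaFinEquiv.symm r) = ∑ b, ∑ t, f ⟨b, t⟩ :=
  (finSigmaFinEquiv.symm.sum_comp f).trans (Fintype.sum_sigma f)

theorem isDist_single {k : ℕ} (j : Fin k) : IsDist (Pi.single j 1 : Fin k → ℝ) :=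
  ⟨fun a => by by_cases h : a = j <;> simp [h], by simp⟩

namespace ProbPoly

variable {m n : ℕ}

/-- The mixture `∑ b, w b * q b`, with the terms of `q b` listed block after block. -/
def mix (w : Fin m → ℝ) (hw : IsDist w) (q : Fin m → ProbPoly n) : ProbPoly n where
  numTerms := ∑ b, (q b).numTerms
  p r := w (finSigmaFinEquiv.symm r).1 * (q _).p (finSigmaFinEquiv.symm r).2
  expo r := (q _).expo (finSigmaFinEquiv.symm r).2
  p_nonneg _ := mul_nonneg (hw.1 _) ((q _).p_nonneg _)
  p_sum_le_one := by
    refine (Fintype.sum_finSigmaFinEquiv_symm (k := fun b => (q b).numTerms)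
      fun x => w x.1 * (q x.1).p x.2).trans_le ?_
    calc ∑ b, ∑ t, w b * (q b).p t = ∑ b, w b * ∑ t, (q b).p t := by simp only [mul_sum]
      _ ≤ ∑ b, w b * 1 :=
        sum_le_sum fun b _ => mul_le_mul_of_nonneg_left (q b).p_sum_le_one (hw.1 b)
      _ = 1 := by simp [hw.2]

variable (w : Fin m → ℝ) (hw : IsDist w) (q : Fin m → ProbPoly n)

theorem eval_mix (x : Fin n → ℝ) : (mix w hw q).eval x = ∑ b, w b * (q b).eval x := by
  refine (Fintype.sum_finSigmaFinEquiv_symm (k := fun b => (q b).numTerms)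
    fun y => w y.1 * (q y.1).p y.2 * ∏ j, x j ^ (q y.1).expo y.2 j).trans ?_
  simp only [eval, mul_sum, mul_assoc]

theorem sum_p_mix : ∑ r, (mix w hw q).p r = ∑ b, w b * ∑ t, (q b).p t := by
  refine (Fintype.sum_finSigmaFinEquiv_symm (k := fun b => (q b).numTerms)
    fun x => w x.1 * (q x.1).p x.2).trans ?_
  simp only [mul_sum]

theorem exists_term_mix (Φ : (Fin n → ℕ) → Prop) :
    (∃ r, (mix w hw q).p r ≠ 0 ∧ Φ ((mix w hw q).expo r)) ↔
      ∃ b t, w b ≠ 0 ∧ (q b).p t ≠ 0 ∧ Φ ((q b).expo t) := by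
  refine (finSigmaFinEquiv.symm.exists_congr_right (q := fun x : Σ b, Fin (q b).numTerms =>
    w x.1 * (q x.1).p x.2 ≠ 0 ∧ Φ ((q x.1).expo x.2))).trans ?_
  simp [Sigma.exists, and_assoc]

theorem forall_term_mix (Φ : (Fin n → ℕ) → Prop) :
    (∀ r, (mix w hw q).p r ≠ 0 → Φ ((mix w hw q).expo r)) ↔
      ∀ b t, w b ≠ 0 → (q b).p t ≠ 0 → Φ ((q b).expo t) := by
  refine (finSigmaFinEquiv.symm.forall_congr_right (q := fun x : Σ b, Fin (q b).numTerms =>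
    w x.1 * (q x.1).p x.2 ≠ 0 → Φ ((q x.1).expo x.2))).trans ?_
  simp [Sigma.forall]

end ProbPoly

theorem gameVal_le_iSup_mulVec {k m : ℕ} (B : Matrix (Fin k) (Fin m) ℝ) {t : Fin m → ℝ}
    (ht : t ∈ stdSimplex ℝ (Fin m)) : gameVal B ≤ ⨆ j, B.mulVec t j := by
  rcases isEmpty_or_nonempty (Fin k) with hk | hk
  · have : IsEmpty (stdSimplex ℝ (Fin k)) := ⟨fun s => by simpa using s.2.2⟩
    simp [gameVal]
  refine ciSup_le fun s => ?_
  have hbdd : BddBelow (Set.range fun t' : stdSimplex ℝ (Fin m) =>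
      ∑ i, ∑ j, s.1 i * B i j * t'.1 j) :=
    (isCompact_range (continuous_finsetSum _ fun i _ => continuous_finsetSum _ fun j _ =>
      continuous_const.mul ((continuous_apply j).comp continuous_subtype_val))).bddBelow
  calc ⨅ t' : stdSimplex ℝ (Fin m), ∑ i, ∑ j, s.1 i * B i j * t'.1 j
      ≤ ∑ i, ∑ j, s.1 i * B i j * t j := ciInf_le hbdd ⟨t, ht⟩
    _ = ∑ i, s.1 i * B.mulVec t i := by
      simp only [Matrix.mulVec, dotProduct, mul_sum, mul_assoc]
    _ ≤ ∑ i, s.1 i * ⨆ j, B.mulVec t j := sum_le_sum fun i _ =>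
      mul_le_mul_of_nonneg_left (le_ciSup (Set.finite_range _).bddAbove i) (s.2.1 i)
    _ = ⨆ j, B.mulVec t j := by rw [← sum_mul, s.2.2, one_mul]

namespace MinimaxPPS

variable {n : ℕ} (P : MinimaxPPS n) {τ : ∀ i, Fin (P.nc i) → ℝ}

theorem le_fixMin (x : Fin n → ℝ) (i : Fin n) (j : Fin (P.nr i)) :
    ∑ k, τ i k * (P.q i j k).eval x ≤ P.fixMin τ x i :=
  le_ciSup (Finite.bddAbove_range fun j => ∑ k, τ i k * (P.q i j k).eval x) j

theorem eval_le_fixMin (hτ : ∀ i, IsDist (τ i)) (x : Fin n → ℝ) :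
    P.eval x ≤ P.fixMin τ x := fun i =>
  (gameVal_le_iSup_mulVec _ ⟨(hτ i).1, (hτ i).2⟩).trans_eq <| iSup_congr fun j => by
    simp [A, Matrix.mulVec, dotProduct, mul_comm]

variable (row : ∀ i, Fin (P.nr i)) (hτ : ∀ i, IsDist (τ i))

/-- `P_{σ,τ}` for the pure max-policy `σ` playing row `row i` at every `i`. -/
def rowPPS : PPS n := ⟨fun i => ProbPoly.mix (τ i) (hτ i) (P.q i (row i))⟩

theorem eval_rowPPS (x : Fin n → ℝ) (i : Fin n) :
    (P.rowPPS row hτ).eval x i = ∑ k, τ i k * (P.q i (row i) k).eval x :=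
  ProbPoly.eval_mix (τ i) (hτ i) _ x

theorem isLDF_rowPPS (hLDF : P.IsLDFPolicy τ) : (P.rowPPS row hτ).IsLDF := by
  intro hbot
  refine hLDF (fun i => Pi.single (row i) 1) (fun i => isDist_single (row i)) (hbot.of_iff ?_ ?_)
  · intro i j
    refine (ProbPoly.exists_term_mix (τ i) (hτ i) _ fun e => e j ≠ 0).trans ?_
    simp [dependsMix, Pi.single_apply]
  · intro i ⟨hdeg, hsum⟩
    replace hdeg := (ProbPoly.forall_term_mix (τ i) (hτ i) _ fun e => ∑ j, e j = 1).1 hdeg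
    replace hsum := (ProbPoly.sum_p_mix (τ i) (hτ i) _).symm.trans hsum
    refine ⟨fun a b r ha hb hr => ?_, ?_⟩
    · obtain rfl : a = row i := by simpa [Pi.single_apply] using ha
      exact hdeg b r hb hr
    · simpa [Pi.single_apply, mul_assoc, mul_sum] using hsum

end MinimaxPPS

/-- For a minimax-PPS whose greatest fixed point `g*` satisfies
`g* < 1` in every coordinate, and any LDF policy `τ'` for the min player,
`g* ≤ q*_{*,τ'}`, the least fixed point of the maxPPS `P_{*,τ'}`. -/
theorem minimaxPPS_GFP_le_LFP_of_LDF_policy {n : ℕ} (P : MinimaxPPS n)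
    (g : Fin n → ℝ) (hg : IsGFP P.eval g) (hlt : ∀ i, g i < 1)
    (τ' : (i : Fin n) → Fin (P.nc i) → ℝ) (hτ : ∀ i, IsDist (τ' i))
    (hLDF : P.IsLDFPolicy τ') :
    ∀ q', IsLFP (P.fixMin τ') q' → g ≤ q' := by
  intro q hq
  obtain ⟨hgbox, hgfix, -⟩ := hg
  obtain ⟨hqbox, hqfix, -⟩ := hq
  have : ∀ i, Nonempty (Fin (P.nr i)) := fun i => ⟨⟨0, P.nr_pos i⟩⟩
  choose row hrow using fun i => exists_eq_ciSup_of_finite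
    (f := fun j : Fin (P.nr i) => ∑ k, τ' i k * (P.q i j k).eval g)
  refine (P.rowPPS row hτ).le_of_isLDF (P.isLDF_rowPPS row hτ hLDF) hqbox (fun i => ?_)
    (fun i => (hgbox i).1) hlt (fun i => ?_)
  · rw [MinimaxPPS.eval_rowPPS]
    conv_rhs => rw [← hqfix]
    exact P.le_fixMin q i (row i)
  · calc g i = P.eval g i := by rw [hgfix]
      _ ≤ P.fixMin τ' g i := P.eval_le_fixMin hτ g i
      _ = (P.rowPPS row hτ).eval g i := by rw [MinimaxPPS.eval_rowPPS, hrow i]; rfl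
end

section
/- Let R and C be nonempty finite sets and ℓ : R × C → {s, f, o} a labeling. Define L_0 = ∅, B_0 = ∅ and, for k ≥ 1, L_k = {c ∈ C \ (L_1 ∪ … ∪ L_{k−1}) : for all r ∈ R \ B_{k−1}, ℓ(r,c) ∈ {f, o}} and B_k = B_{k−1} ∪ {r ∈ R \ B_{k−1} : there exists c ∈ L_k with ℓ(r,c) = f}. Suppose m ≥ 1 satisfies B_m = B_{m−1} and B_m ≠ R, let D = R \ B_m, and let σ be the uniform probability distribution on D (extended by 0 outside D). Then for every probability distribution t on C: ∑_{(r,c) : ℓ(r,c) = s} σ(r)·t(c) ≥ (1/|D|) · ∑_{(r,c) : ℓ(r,c) ∈ {s, f}} σ(r)·t(c). -/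
open Filter Topology

/-- the key combinatorial lemma behind the limit-sure algorithm.
With the sets `L_k`, `B_k` computed as in step 4.(b), if the iteration stops at
`m ≥ 1` with `B_m = B_{m-1} ≠ R`, and `σ` is uniform on `D = R \ B_m`, then for
every distribution `t` on the columns,
`∑_{ℓ = s} σ(r) t(c) ≥ (1/|D|) ∑_{ℓ ∈ {s,f}} σ(r) t(c)`. -/
theorem limitSure_ratio_lemma {R C : Type} [Fintype R] [Fintype C]
    [Nonempty R] [Nonempty C] (ℓ : R → C → Lab)
    (L : ℕ → Set C) (B : ℕ → Set R)
    (hL0 : L 0 = ∅) (hB0 : B 0 = ∅)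
    (hL : ∀ k : ℕ, L (k + 1) =
      {c | (∀ j ≤ k, c ∉ L j) ∧
        ∀ r, r ∉ B k → (ℓ r c = Lab.f ∨ ℓ r c = Lab.o)})
    (hB : ∀ k : ℕ, B (k + 1) = B k ∪ {r | ∃ c ∈ L (k + 1), ℓ r c = Lab.f})
    (m : ℕ) (hm : 1 ≤ m) (hstop : B m = B (m - 1)) (hne : B m ≠ Set.univ)
    (D : Set R) (hD : D = Set.univ \ B m)
    (σ : R → ℝ) (hσ : σ = D.indicator fun _ => 1 / (D.ncard : ℝ)) :
    ∀ t : C → ℝ, (∀ c, 0 ≤ t c) → (∑ c, t c) = 1 →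
      (1 / (D.ncard : ℝ)) *
          (∑ r, ∑ c, if ℓ r c = Lab.s ∨ ℓ r c = Lab.f then σ r * t c else 0)
        ≤ ∑ r, ∑ c, if ℓ r c = Lab.s then σ r * t c else 0 := by
  classical
  intro t ht ht1
  obtain ⟨r0, hr0⟩ := (Set.ne_univ_iff_exists_notMem _).mp hne
  have hDne : D.Nonempty := ⟨r0, by rw [hD]; exact ⟨trivial, hr0⟩⟩
  have hNpos : 0 < D.ncard := (Set.ncard_pos (Set.toFinite D)).mpr hDne
  set n : ℝ := (D.ncard : ℝ) with hn
  have hnpos : 0 < n := by rw [hn]; exact_mod_cast hNpos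
  have hσD : ∀ r ∈ D, σ r = 1 / n := by
    intro r hr; rw [hσ, Set.indicator_of_mem hr]
  have hσ0 : ∀ r, r ∉ D → σ r = 0 := by
    intro r hr; rw [hσ, Set.indicator_of_notMem hr]
  have hσnn : ∀ r, 0 ≤ σ r := by
    intro r
    by_cases hr : r ∈ D
    · rw [hσD r hr]; positivity
    · rw [hσ0 r hr]
  have hBmono : Monotone B := monotone_nat_of_le_succ fun k => by
    rw [hB k]; exact Set.subset_union_left
  have hDmem : ∀ r ∈ D, r ∉ B m := by intro r hr; rw [hD] at hr; exact hr.2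
  -- key1 : rows in D see only `o` on columns of any `L k`, k ≤ m
  have key1 : ∀ r ∈ D, ∀ c, ∀ k, k ≤ m → c ∈ L k → ℓ r c = Lab.o := by
    intro r hr c k hk hc
    match k, hk, hc with
    | 0, hk, hc => rw [hL0] at hc; exact absurd hc (Set.notMem_empty c)
    | j+1, hk, hc =>
      have hc' := hc
      rw [hL j] at hc'
      have hrBj : r ∉ B j :=
        fun h => hDmem r hr (hBmono (le_trans (Nat.le_succ j) hk) h)
      rcases hc'.2 r hrBj with hf | ho
      · exfalso
        apply hDmem r hr
        apply hBmono hk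
        rw [hB j]
        exact Or.inr ⟨c, hc, hf⟩
      · exact ho
  -- key2 : every "good" column has an `s` entry in some row of D
  have key2 : ∀ c, (∀ k, k ≤ m → c ∉ L k) → ∃ r ∈ D, ℓ r c = Lab.s := by
    intro c hc
    have hm' : m - 1 + 1 = m := Nat.succ_pred_eq_of_pos hm
    have hcLm : c ∉ L m := hc m le_rfl
    rw [← hm', hL (m-1)] at hcLm
    have h1 : ∀ j ≤ m - 1, c ∉ L j := fun j hj => hc j (le_trans hj (Nat.sub_le m 1))
    have h2 : ¬ ∀ r, r ∉ B (m-1) → (ℓ r c = Lab.f ∨ ℓ r c = Lab.o) := by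
      intro h2; exact hcLm ⟨h1, h2⟩
    push_neg at h2
    obtain ⟨r, hrB, hnf, hno⟩ := h2
    refine ⟨r, ?_, ?_⟩
    · rw [hD]; exact ⟨trivial, by rw [hstop]; exact hrB⟩
    · cases h : ℓ r c with
      | s => rfl
      | f => exact absurd h hnf
      | o => exact absurd h hno
  -- sum of σ is 1
  have hσsum : ∑ r, σ r = 1 := by
    have h1 : ∑ r ∈ D.toFinset, σ r = ∑ r, σ r :=
      Finset.sum_subset (Finset.subset_univ _)
        (fun r _ hr => hσ0 r (by simpa using hr))
    have h2 : ∑ r ∈ D.toFinset, σ r = (D.toFinset.card : ℝ) * (1 / n) := by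
      rw [Finset.sum_congr rfl (fun r hr => hσD r (by simpa using hr))]
      simp [mul_comm]
    have h3 : (D.toFinset.card : ℝ) = n := by
      rw [hn, Set.ncard_eq_toFinset_card']
    rw [← h1, h2, h3]
    field_simp
  set Good : C → Prop := fun c => ∀ k, k ≤ m → c ∉ L k with hGood
  have hGdnn : ∀ c, (0:ℝ) ≤ if Good c then t c else 0 := by
    intro c; by_cases h : Good c
    · rw [if_pos h]; exact ht c
    · rw [if_neg h]
  set G : ℝ := ∑ c, if Good c then t c else 0 with hG
  have htermnn : ∀ r c, (0:ℝ) ≤ if ℓ r c = Lab.s then σ r * t c else 0 := by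
    intro r c; by_cases h : ℓ r c = Lab.s
    · rw [if_pos h]; exact mul_nonneg (hσnn r) (ht c)
    · rw [if_neg h]
  -- Step A
  have stepA : (∑ r, ∑ c, if ℓ r c = Lab.s ∨ ℓ r c = Lab.f then σ r * t c else 0) ≤ G := by
    have h1 : ∀ r c, (if ℓ r c = Lab.s ∨ ℓ r c = Lab.f then σ r * t c else 0)
        ≤ σ r * (if Good c then t c else 0) := by
      intro r c
      by_cases hcond : ℓ r c = Lab.s ∨ ℓ r c = Lab.f
      · rw [if_pos hcond]
        by_cases hr : r ∈ D
        · have hg : Good c := by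
            intro k hk hc
            have h := key1 r hr c k hk hc
            rcases hcond with h' | h' <;> rw [h] at h' <;> exact Lab.noConfusion h'
          rw [if_pos hg]
        · rw [hσ0 r hr, zero_mul, zero_mul]
      · rw [if_neg hcond]
        exact mul_nonneg (hσnn r) (hGdnn c)
    calc (∑ r, ∑ c, if ℓ r c = Lab.s ∨ ℓ r c = Lab.f then σ r * t c else 0)
        ≤ ∑ r, ∑ c, σ r * (if Good c then t c else 0) :=
          Finset.sum_le_sum (fun r _ => Finset.sum_le_sum fun c _ => h1 r c)
      _ = (∑ r, σ r) * G := by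
          rw [Finset.sum_mul]
          exact Finset.sum_congr rfl fun r _ => by rw [← Finset.mul_sum]
      _ = G := by rw [hσsum, one_mul]
  -- Step B
  have stepB : (1/n) * G ≤ ∑ r, ∑ c, if ℓ r c = Lab.s then σ r * t c else 0 := by
    rw [Finset.sum_comm]
    have hcol : ∀ c, (if Good c then (1/n) * t c else 0)
        ≤ ∑ r, if ℓ r c = Lab.s then σ r * t c else 0 := by
      intro c
      by_cases hg : Good c
      · obtain ⟨r, hrD, hrs⟩ := key2 c hg
        rw [if_pos hg]
        have hle := Finset.single_le_sum
          (f := fun r => if ℓ r c = Lab.s then σ r * t c else 0)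
          (fun r _ => htermnn r c) (Finset.mem_univ r)
        calc (1/n) * t c = σ r * t c := by rw [hσD r hrD]
          _ = if ℓ r c = Lab.s then σ r * t c else 0 := by rw [if_pos hrs]
          _ ≤ _ := hle
      · rw [if_neg hg]
        exact Finset.sum_nonneg fun r _ => htermnn r c
    calc (1/n) * G = ∑ c, if Good c then (1/n) * t c else 0 := by
          rw [hG, Finset.mul_sum]
          exact Finset.sum_congr rfl fun c _ => by
            by_cases h : Good c <;> simp [h]
      _ ≤ _ := Finset.sum_le_sum fun c _ => hcol c
  calc (1/n) * (∑ r, ∑ c, if ℓ r c = Lab.s ∨ ℓ r c = Lab.f then σ r * t c else 0)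
      ≤ (1/n) * G := by
        apply mul_le_mul_of_nonneg_left stepA
        positivity
    _ ≤ _ := stepB
end
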